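/- Let L be the Laplacian of a connected graph on n vertices and L† its Moore–Penrose pseudoinverse. For any zero-sum vector x, ‖L†x‖₂² = ‖L_v⁻¹x^(−v)‖₂² − (1/n)(1ᵀL_v⁻¹x^(−v))² for every vertex v, where L_v is the grounded Laplacian at v and x^(−v) is x with entry v deleted. -/

import Mathlib

/-!
Let `z = L_v⁻¹ x^(−v)` and let `w` be `z` extended by `0` at `v`. The columns of `L` and the
entries of `x` sum to zero, so the row of `L w = x` at `v` is implied by the others and `L w = x`.
Then `L (L† x − w) = L L† L w − L w = 0`, so by connectedness `L† x = w + c·1`. Moreover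
`1ᵀ L† x = 1ᵀ L† L w = 0`, since `L† L` is symmetric and `L 1 = 0`. Hence `L† x` is the mean-zero
shift of `w`, whose squared norm is `‖w‖² − (1ᵀ w)² / n`.
-/

open Matrix BigOperators

/-- `B` is the Moore–Penrose pseudoinverse of `A`. -/
def IsMoorePenrose {n : Type*} [Fintype n] [DecidableEq n]
    (A B : Matrix n n ℝ) : Prop :=
  A * B * A = A ∧ B * A * B = B ∧ (A * B)ᵀ = A * B ∧ (B * A)ᵀ = B * A

section ZeroExtend

variable {ι R : Type*} [DecidableEq ι]

def zeroExtend [Zero R] (v : ι) (z : {u // u ≠ v} → R) : ι → R :=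
  fun i => if h : i = v then 0 else z ⟨i, h⟩

@[simp]
lemma zeroExtend_self [Zero R] (v : ι) (z : {u // u ≠ v} → R) : zeroExtend v z v = 0 :=
  dif_pos rfl

@[simp]
lemma zeroExtend_val [Zero R] {v : ι} (z : {u // u ≠ v} → R) (j : {u // u ≠ v}) :
    zeroExtend v z j = z j :=
  dif_neg j.2

lemma sum_zeroExtend [Fintype ι] {M : Type*} [Zero R] [AddCommMonoid M] {v : ι}
    (z : {u // u ≠ v} → R) (f : ι → R → M) (hf : ∀ i, f i 0 = 0) :
    ∑ i, f i (zeroExtend v z i) = ∑ j : {u // u ≠ v}, f j (z j) := by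
  rw [Fintype.sum_eq_add_sum_subtype_ne _ v]
  simp [hf]

lemma mulVec_zeroExtend_val [Fintype ι] [NonUnitalNonAssocSemiring R] {v : ι}
    (M : Matrix ι ι R) (z : {u // u ≠ v} → R) (u : {u // u ≠ v}) :
    (M *ᵥ zeroExtend v z) u = (M.submatrix Subtype.val Subtype.val *ᵥ z) u :=
  sum_zeroExtend z (fun j a => M u j * a) fun _ => mul_zero _

lemma eq_of_sum_eq_of_forall_ne [Fintype ι] [AddCommGroup R] {f g : ι → R} (v : ι)
    (hsum : ∑ i, f i = ∑ i, g i) (hne : ∀ u, u ≠ v → f u = g u) : f = g := by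
  have hrest : ∑ u : {u // u ≠ v}, f u = ∑ u : {u // u ≠ v}, g u :=
    Fintype.sum_congr _ _ fun u => hne u u.2
  rw [Fintype.sum_eq_add_sum_subtype_ne _ v, Fintype.sum_eq_add_sum_subtype_ne g v, hrest]
    at hsum
  funext u
  by_cases hu : u = v
  · subst hu; exact add_right_cancel hsum
  · exact hne u hu

lemma mulVec_zeroExtend_eq [Fintype ι] [CommRing R] {M : Matrix ι ι R} (hM : 1 ᵥ* M = 0)
    {v : ι} {z : {u // u ≠ v} → R} {x : ι → R}
    (hz : M.submatrix Subtype.val Subtype.val *ᵥ z = fun u : {u // u ≠ v} => x u)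
    (hx : ∑ i, x i = 0) :
    M *ᵥ zeroExtend v z = x := by
  refine eq_of_sum_eq_of_forall_ne v ?_ fun u hu => ?_
  · rw [hx, ← one_dotProduct, dotProduct_mulVec, hM, zero_dotProduct]
  · exact (mulVec_zeroExtend_val M z ⟨u, hu⟩).trans (congrFun hz ⟨u, hu⟩)

end ZeroExtend

lemma sum_sq_eq_of_eq_add_const {ι : Type*} [Fintype ι] {y w : ι → ℝ} {c : ℝ}
    (hy : ∑ i, y i = 0) (hyw : ∀ i, y i = w i + c) :
    ∑ i, y i ^ 2 = ∑ i, w i ^ 2 - 1 / Fintype.card ι * (∑ i, w i) ^ 2 := by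
  simp only [hyw, add_sq, Finset.sum_add_distrib, Finset.sum_const, Finset.card_univ,
    nsmul_eq_mul, ← Finset.sum_mul, ← Finset.mul_sum] at hy ⊢
  rcases (Fintype.card ι).eq_zero_or_pos with hcard | hcard
  · simp_all [Fintype.card_eq_zero_iff]
  · have hc : c = -(∑ i, w i) / Fintype.card ι := by
      field_simp; linarith
    rw [hc]; field_simp; ring

namespace IsMoorePenrose

variable {ι : Type*} [Fintype ι] [DecidableEq ι] {A B : Matrix ι ι ℝ}

lemma mulVec_mulVec_mulVec (h : IsMoorePenrose A B) (w : ι → ℝ) :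
    A *ᵥ (B *ᵥ (A *ᵥ w)) = A *ᵥ w := by
  rw [mulVec_mulVec, mulVec_mulVec, h.1]

lemma vecMul_mul_eq_zero (h : IsMoorePenrose A B) {u : ι → ℝ} (hu : A *ᵥ u = 0) :
    u ᵥ* (B * A) = 0 := by
  -- `B A` is symmetric
  rw [← h.2.2.2, vecMul_transpose, ← mulVec_mulVec, hu, mulVec_zero]

end IsMoorePenrose

lemma SimpleGraph.Connected.exists_eq_add_const_of_lapMatrix_mulVec_eq {V : Type*} [Fintype V]
    [DecidableEq V] {G : SimpleGraph V} [DecidableRel G.Adj] (hG : G.Connected)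
    {y w : V → ℝ} (h : G.lapMatrix ℝ *ᵥ y = G.lapMatrix ℝ *ᵥ w) :
    ∃ c, ∀ i, y i = w i + c := by
  obtain ⟨v⟩ := hG.nonempty
  have hker := G.lapMatrix_mulVec_eq_zero_iff_forall_reachable.mp
    (by rw [mulVec_sub, h, sub_self] : G.lapMatrix ℝ *ᵥ (y - w) = 0)
  refine ⟨y v - w v, fun i => ?_⟩
  have := hker i v (hG.preconnected i v)
  simp only [Pi.sub_apply] at this
  linarith

theorem stmt6 {n : ℕ} (G : SimpleGraph (Fin n)) [DecidableRel G.Adj]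
    (hconn : G.Connected)
    (Ld : Matrix (Fin n) (Fin n) ℝ) (hLd : IsMoorePenrose (G.lapMatrix ℝ) Ld)
    (x : Fin n → ℝ) (hx : ∑ i, x i = 0)
    (v : Fin n)
    (Lv : Matrix {u : Fin n // u ≠ v} {u : Fin n // u ≠ v} ℝ)
    (hLv : Lv = (G.lapMatrix ℝ).submatrix
      (Subtype.val : {u : Fin n // u ≠ v} → Fin n) Subtype.val)
    (hinv : IsUnit Lv) :
    ∑ i, (Ld.mulVec x i) ^ 2 =
      ∑ w, (Lv⁻¹.mulVec (fun u => x u.val) w) ^ 2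
        - (1 / (n : ℝ)) * (∑ w, Lv⁻¹.mulVec (fun u => x u.val) w) ^ 2 := by
  set z := Lv⁻¹ *ᵥ fun u => x u.val
  have hLvz : Lv *ᵥ z = fun u => x u.val := by
    rw [mulVec_mulVec, mul_nonsing_inv _ ((isUnit_iff_isUnit_det Lv).mp hinv), one_mulVec]
  have hcols : 1 ᵥ* G.lapMatrix ℝ = 0 := by
    rw [← (G.isSymm_lapMatrix (R := ℝ)).eq, vecMul_transpose]
    exact G.lapMatrix_mulVec_const_eq_zero
  have hLw : G.lapMatrix ℝ *ᵥ zeroExtend v z = x :=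
    mulVec_zeroExtend_eq hcols (hLv ▸ hLvz) hx
  obtain ⟨c, hc⟩ := hconn.exists_eq_add_const_of_lapMatrix_mulVec_eq
    (y := Ld *ᵥ x) (w := zeroExtend v z) (by rw [← hLw, hLd.mulVec_mulVec_mulVec])
  have hsum : ∑ i, (Ld *ᵥ x) i = 0 := by
    rw [← one_dotProduct, ← hLw, mulVec_mulVec, dotProduct_mulVec,
      hLd.vecMul_mul_eq_zero (u := 1) G.lapMatrix_mulVec_const_eq_zero, zero_dotProduct]
  rw [sum_sq_eq_of_eq_add_const hsum hc, Fintype.card_fin,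
    sum_zeroExtend z (fun _ a => a ^ 2) fun _ => zero_pow two_ne_zero,
    sum_zeroExtend z (fun _ a => a) fun _ => rfl]
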